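/- Let β' be a sparse RNN parameter with nnz(w^h(β')) ≤ r_{w_h} where r_{w_h} ≥ 1 (h = 1,…,H), nnz(v^h(β')) ≤ r_{v_h} where r_{v_h} ≥ 1 (h = 1,…,H−1), and all entries bounded in absolute value by E' ≥ 1. Let β̃ be any RNN parameter (same architecture) with |β'_j − β̃_j| ≤ δ₂ for every index j, where δ₂ ≥ 0. Then for every t ≥ 1 and every hidden layer 1 ≤ i ≤ H−1, Σ_{j=1}^{L_i} |z_t^i(β')(j) − z_t^i(β̃)(j)| ≤ t^{i+1} · δ₂ · (p·L_1 + Σ_{k=1}^{i} L_k) · (Π_{k=1}^{i} [δ₂·L_k + r_{w_k}·E']) · (Π_{k=1}^{i} [δ₂·L_k + r_{v_k}·E'])^{t−1}. -/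

import Mathlib

open Finset

/-- Number of nonzero entries of a matrix. -/
noncomputable def nnz {m n : Type*} [Fintype m] [Fintype n] (A : Matrix m n ℝ) : ℕ :=
  Nat.card {p : m × n // A p.1 p.2 ≠ 0}

/-- One time-step of the RNN: given the previous time slice `prev` of hidden states and the
current input `xt`, compute the hidden states of all layers at the current time. -/
noncomputable def zLayer (L : ℕ → ℕ)
    (w : (h : ℕ) → Matrix (Fin (L h)) (Fin (L (h - 1))) ℝ)
    (v : (h : ℕ) → Matrix (Fin (L h)) (Fin (L h)) ℝ)
    (ψ : ℕ → ℝ → ℝ)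
    (prev : (h : ℕ) → Fin (L h) → ℝ) (xt : Fin (L 0) → ℝ) :
    (h : ℕ) → Fin (L h) → ℝ
  | 0 => xt
  | h + 1 => fun j =>
      ψ (h + 1) ((w (h + 1)).mulVec (zLayer L w v ψ prev xt h) j
        + (v (h + 1)).mulVec (prev (h + 1)) j)

/-- The hidden states `hiddenState L w v ψ x t h : Fin (L h) → ℝ` of the RNN:
`hiddenState L w v ψ x t 0 = x t` for `t ≥ 1`, `hiddenState L w v ψ x 0 h = 0`, and
`hiddenState L w v ψ x t h = ψ h (w h ⬝ z_t^{h-1} + v h ⬝ z_{t-1}^h)` for `t, h ≥ 1`. -/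
noncomputable def hiddenState (L : ℕ → ℕ)
    (w : (h : ℕ) → Matrix (Fin (L h)) (Fin (L (h - 1))) ℝ)
    (v : (h : ℕ) → Matrix (Fin (L h)) (Fin (L h)) ℝ)
    (ψ : ℕ → ℝ → ℝ)
    (x : ℕ → Fin (L 0) → ℝ) : ℕ → (h : ℕ) → Fin (L h) → ℝ
  | 0 => fun _ _ => 0
  | t + 1 => zLayer L w v ψ (hiddenState L w v ψ x t) (x (t + 1))

/-- The output of the `H`-layer RNN at time `t`: `O_t = w^H z_t^{H-1}`. -/
noncomputable def output (L : ℕ → ℕ) (H : ℕ)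
    (w : (h : ℕ) → Matrix (Fin (L h)) (Fin (L (h - 1))) ℝ)
    (v : (h : ℕ) → Matrix (Fin (L h)) (Fin (L h)) ℝ)
    (ψ : ℕ → ℝ → ℝ)
    (x : ℕ → Fin (L 0) → ℝ) (t : ℕ) : Fin (L H) → ℝ :=
  (w H).mulVec (hiddenState L w v ψ x t (H - 1))

open Matrix

/-!
Let `D(t, h)` be the `ℓ¹` distance between the layer-`h` states of the two networks at time `t`
and `N(t, h)` the `ℓ¹` norm of the sparse network's state. Since
`A u - B u' = (A - B) u + A (u - u') - (A - B) (u - u')`, only the sparse matrix `A` ever multiplies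
the error `u - u'`, and the 1-Lipschitz activations give, with `L = L_{h+1}`,
`D(t+1, h+1) ≤ δ L N(t+1, h) + (δ L + r_w E) D(t+1, h) + δ L N(t, h+1) + (δ L + r_v E) D(t, h+1)`.
The same argument bounds `N` by `g(t, h) = t^h ∏_{k ≤ h} a_k (∏_{k ≤ h} b_k)^(t-1)` with gains
`a_k = r_{w_k} E ≤ δ L_k + r_{w_k} E` and `b_k = r_{v_k} E ≤ δ L_k + r_{v_k} E`, and `g` satisfies
`a_{h+1} g(t+1, h) + b_{h+1} g(t, h+1) ≤ g(t+1, h+1)` because `(t+1)^h + t^(h+1) ≤ (t+1)^(h+1)`.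
A double induction on time and layer then gives `D(t, h) ≤ δ S_h t g(t, h)` with
`S_h = p L_1 + ∑_{k ≤ h} L_k`.
-/

lemma abs_mulVec_apply_le {m n : Type*} [Fintype n] (A : Matrix m n ℝ) (u : n → ℝ) (j : m) :
    |(A *ᵥ u) j| ≤ ∑ k, |A j k| * |u k| := by
  simpa only [Matrix.mulVec, dotProduct, abs_mul] using
    abs_sum_le_sum_abs (fun k => A j k * u k) univ

lemma abs_apply_le_sum_abs {ι : Type*} [Fintype ι] (u : ι → ℝ) (j : ι) : |u j| ≤ ∑ k, |u k| :=
  single_le_sum (f := fun k => |u k|) (fun k _ => abs_nonneg (u k)) (mem_univ j)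

section MatrixBounds

variable {m n : Type*} [Fintype m] [Fintype n]

lemma sum_abs_mulVec_le_of_nnz_le {A : Matrix m n ℝ} {u : n → ℝ} {r : ℕ} {E M : ℝ}
    (hA : ∀ j k, |A j k| ≤ E) (hr : nnz A ≤ r) (hu : ∀ k, |u k| ≤ M) (hE : 0 ≤ E) (hM : 0 ≤ M) :
    ∑ j, |(A *ᵥ u) j| ≤ r * E * M := by
  classical
  have hcard : nnz A = #{p : m × n | A p.1 p.2 ≠ 0} := by
    rw [nnz, Nat.card_eq_fintype_card, Fintype.card_subtype]
  calc ∑ j, |(A *ᵥ u) j| ≤ ∑ j, ∑ k, |A j k| * |u k| :=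
        sum_le_sum fun j _ => abs_mulVec_apply_le A u j
    _ = ∑ p : m × n, |A p.1 p.2| * |u p.2| := (Fintype.sum_prod_type' _).symm
    _ ≤ ∑ p : m × n, if A p.1 p.2 ≠ 0 then E * M else 0 := by
        gcongr with p
        split_ifs with hp
        · exact mul_le_mul (hA _ _) (hu _) (abs_nonneg _) hE
        · simp [not_not.mp hp]
    _ = nnz A * (E * M) := by rw [← sum_filter, sum_const, nsmul_eq_mul, hcard]
    _ ≤ r * E * M := by rw [mul_assoc]; gcongr

lemma sum_abs_mulVec_le_of_abs_le {A : Matrix m n ℝ} {u : n → ℝ} {δ : ℝ}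
    (hA : ∀ j k, |A j k| ≤ δ) : ∑ j, |(A *ᵥ u) j| ≤ δ * Fintype.card m * ∑ k, |u k| := by
  calc ∑ j, |(A *ᵥ u) j| ≤ ∑ j, ∑ k, |A j k| * |u k| :=
        sum_le_sum fun j _ => abs_mulVec_apply_le A u j
    _ ≤ ∑ _j : m, ∑ k, δ * |u k| := by gcongr with j _ k; exact hA j k
    _ = δ * Fintype.card m * ∑ k, |u k| := by
        rw [sum_const, card_univ, nsmul_eq_mul, ← mul_sum]; ring

lemma sum_abs_mulVec_sub_mulVec_le {A B : Matrix m n ℝ} {u u' : n → ℝ} {r : ℕ} {E δ : ℝ}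
    (hA : ∀ j k, |A j k| ≤ E) (hr : nnz A ≤ r) (hE : 0 ≤ E) (hAB : ∀ j k, |A j k - B j k| ≤ δ) :
    ∑ j, |(A *ᵥ u) j - (B *ᵥ u') j| ≤
      δ * Fintype.card m * ∑ k, |u k| + (δ * Fintype.card m + r * E) * ∑ k, |u k - u' k| := by
  have hsplit : ∀ j, (A *ᵥ u) j - (B *ᵥ u') j =
      ((A - B) *ᵥ u) j + (A *ᵥ (u - u')) j - ((A - B) *ᵥ (u - u')) j := fun j => by
    simp only [Matrix.sub_mulVec, Matrix.mulVec_sub, Pi.sub_apply]; ring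
  have hdense := sum_abs_mulVec_le_of_abs_le (A := A - B) (u := u) hAB
  have hsparse := sum_abs_mulVec_le_of_nnz_le (u := u - u') hA hr
    (fun k => abs_apply_le_sum_abs (u - u') k) hE (sum_nonneg fun k _ => abs_nonneg _)
  have hdense' := sum_abs_mulVec_le_of_abs_le (A := A - B) (u := u - u') hAB
  simp only [Pi.sub_apply] at hsparse hdense'
  calc ∑ j, |(A *ᵥ u) j - (B *ᵥ u') j|
      ≤ ∑ j, (|((A - B) *ᵥ u) j| + |(A *ᵥ (u - u')) j| + |((A - B) *ᵥ (u - u')) j|) := by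
        gcongr with j
        rw [hsplit]
        exact (abs_sub _ _).trans (add_le_add (abs_add_le _ _) le_rfl)
    _ ≤ _ := by simp only [sum_add_distrib]; linarith

end MatrixBounds

lemma sum_abs_comp_add_sub_comp_add_le {ι : Type*} [Fintype ι] {f : ℝ → ℝ}
    (hf : LipschitzWith 1 f) (a b a' b' : ι → ℝ) :
    ∑ j, |f (a j + b j) - f (a' j + b' j)| ≤ ∑ j, |a j - a' j| + ∑ j, |b j - b' j| := by
  rw [← sum_add_distrib]
  gcongr with j
  have hdist := hf.dist_le_mul (a j + b j) (a' j + b' j)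
  rw [Real.dist_eq, Real.dist_eq, NNReal.coe_one, one_mul] at hdist
  exact hdist.trans (by rw [add_sub_add_comm]; exact abs_add_le _ _)

lemma sum_abs_comp_add_le {ι : Type*} [Fintype ι] {f : ℝ → ℝ}
    (hf : LipschitzWith 1 f) (hf0 : f 0 = 0) (a b : ι → ℝ) :
    ∑ j, |f (a j + b j)| ≤ ∑ j, |a j| + ∑ j, |b j| := by
  simpa [hf0] using sum_abs_comp_add_sub_comp_add_le hf a b 0 0

lemma add_one_pow_add_pow_succ_le {t : ℝ} (ht : 0 ≤ t) (h : ℕ) :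
    (t + 1) ^ h + t ^ (h + 1) ≤ (t + 1) ^ (h + 1) := by
  have : t ^ h ≤ (t + 1) ^ h := pow_le_pow_left₀ ht (by linarith) h
  rw [pow_succ, pow_succ]
  nlinarith

noncomputable def growth (a b : ℕ → ℝ) (t h : ℕ) : ℝ :=
  (t : ℝ) ^ h * (∏ k ∈ Icc 1 h, a k) * (∏ k ∈ Icc 1 h, b k) ^ (t - 1)

section Growth

variable {a b : ℕ → ℝ} {t h : ℕ}

@[simp]
lemma growth_zero_layer : growth a b t 0 = 1 := by
  simp [growth]

lemma growth_zero_time (hh : h ≠ 0) : growth a b 0 h = 0 := by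
  simp [growth, hh]

lemma growth_nonneg (ha : 0 ≤ a) (hb : 0 ≤ b) : 0 ≤ growth a b t h :=
  mul_nonneg (mul_nonneg (by positivity) (prod_nonneg fun k _ => ha k))
    (pow_nonneg (prod_nonneg fun k _ => hb k) _)

lemma growth_mono {a' b' : ℕ → ℝ} (ha : 0 ≤ a) (haa' : a ≤ a') (hb : 0 ≤ b) (hbb' : b ≤ b') :
    growth a b t h ≤ growth a' b' t h := by
  have hb' : 0 ≤ ∏ k ∈ Icc 1 h, b k := prod_nonneg fun k _ => hb k
  have ha' : 0 ≤ ∏ k ∈ Icc 1 h, a' k := prod_nonneg fun k _ => (ha k).trans (haa' k)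
  unfold growth
  gcongr with k _ k _
  exacts [fun i _ => ha i, haa' k, fun i _ => hb i, hbb' k]

lemma growth_step {n : ℕ} (hn : h + 1 ≤ n) (ha : 0 ≤ a) (hb : ∀ k, 1 ≤ k → k ≤ n → 1 ≤ b k) :
    a (h + 1) * growth a b (t + 1) h + b (h + 1) * growth a b t (h + 1) ≤
      growth a b (t + 1) (h + 1) := by
  unfold growth
  rw [prod_Icc_succ_top le_add_self, prod_Icc_succ_top le_add_self, Nat.add_sub_cancel]
  set P := ∏ k ∈ Icc 1 h, a k
  set Q := ∏ k ∈ Icc 1 h, b k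
  have hP : 0 ≤ P := prod_nonneg fun k _ => ha k
  have hQ : 1 ≤ Q := one_le_prod fun k hk => hb k (mem_Icc.1 hk).1 (by grind)
  have hα : 0 ≤ a (h + 1) := ha _
  have hβ : 1 ≤ b (h + 1) := hb _ le_add_self hn
  have hQβ : b (h + 1) ≤ Q * b (h + 1) := le_mul_of_one_le_left (by positivity) hQ
  have hprev : a (h + 1) * (((t + 1 : ℕ) : ℝ) ^ h * P * Q ^ t) ≤
      ((t + 1 : ℕ) : ℝ) ^ h * (P * a (h + 1) * (Q * b (h + 1)) ^ t) := by
    calc _ = ((t + 1 : ℕ) : ℝ) ^ h * (P * a (h + 1) * Q ^ t) := by ring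
      _ ≤ _ := by gcongr; exact le_mul_of_one_le_right (by positivity) hβ
  have hlag : b (h + 1) * ((t : ℝ) ^ (h + 1) * (P * a (h + 1)) * (Q * b (h + 1)) ^ (t - 1)) ≤
      (t : ℝ) ^ (h + 1) * (P * a (h + 1) * (Q * b (h + 1)) ^ t) := by
    rcases t with _ | s
    · simp
    · calc _ = ((s + 1 : ℕ) : ℝ) ^ (h + 1) *
              (P * a (h + 1) * (b (h + 1) * (Q * b (h + 1)) ^ s)) := by
            rw [Nat.add_sub_cancel]; ring
        _ ≤ _ := by
            rw [pow_succ' (Q * b (h + 1)) s]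
            gcongr
  calc _ ≤ (((t + 1 : ℕ) : ℝ) ^ h + (t : ℝ) ^ (h + 1)) * (P * a (h + 1) * (Q * b (h + 1)) ^ t) := by
        linarith
    _ ≤ ((t + 1 : ℕ) : ℝ) ^ (h + 1) * (P * a (h + 1) * (Q * b (h + 1)) ^ t) := by
        gcongr
        push_cast
        exact add_one_pow_add_pow_succ_le (Nat.cast_nonneg t) h
    _ = _ := by ring

end Growth

lemma time_layer_induction {n : ℕ} {P : ℕ → ℕ → Prop} (zero_time : ∀ h, h ≤ n → P 0 h)
    (zero_layer : ∀ t, P (t + 1) 0)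
    (step : ∀ t h, h + 1 ≤ n → P (t + 1) h → P t (h + 1) → P (t + 1) (h + 1)) :
    ∀ t h, h ≤ n → P t h := by
  intro t
  induction t with
  | zero => exact zero_time
  | succ t iht =>
    intro h
    induction h with
    | zero => exact fun _ => zero_layer t
    | succ h ihh => exact fun hn => step t h hn (ihh (by omega)) (iht _ hn)

section RNN

variable {L : ℕ → ℕ} {w w' : (h : ℕ) → Matrix (Fin (L h)) (Fin (L (h - 1))) ℝ}
  {v v' : (h : ℕ) → Matrix (Fin (L h)) (Fin (L h)) ℝ} {ψ : ℕ → ℝ → ℝ} {x : ℕ → Fin (L 0) → ℝ}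

lemma hiddenState_zero_time (h : ℕ) : hiddenState L w v ψ x 0 h = 0 := rfl

lemma hiddenState_succ_zero (t : ℕ) : hiddenState L w v ψ x (t + 1) 0 = x (t + 1) := rfl

lemma hiddenState_succ_succ (t h : ℕ) :
    hiddenState L w v ψ x (t + 1) (h + 1) = fun j => ψ (h + 1)
      ((w (h + 1) *ᵥ hiddenState L w v ψ x (t + 1) h) j
        + (v (h + 1) *ᵥ hiddenState L w v ψ x t (h + 1)) j) := rfl

lemma sum_abs_hiddenState_le {n : ℕ} {E : ℝ} {rw rv : ℕ → ℕ}
    (hψ : ∀ h, 1 ≤ h → h ≤ n → LipschitzWith 1 (ψ h) ∧ ψ h 0 = 0) (hx : ∀ s j, |x s j| ≤ 1)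
    (hE : 1 ≤ E) (hrv : ∀ h, 1 ≤ h → h ≤ n → 1 ≤ rv h)
    (hwE : ∀ h, 1 ≤ h → h ≤ n → ∀ j k, |w h j k| ≤ E)
    (hvE : ∀ h, 1 ≤ h → h ≤ n → ∀ j k, |v h j k| ≤ E)
    (hwr : ∀ h, 1 ≤ h → h ≤ n → nnz (w h) ≤ rw h)
    (hvr : ∀ h, 1 ≤ h → h ≤ n → nnz (v h) ≤ rv h) :
    ∀ t h, h ≤ n → 1 ≤ h → ∑ j, |hiddenState L w v ψ x t h j| ≤
      growth (fun k => rw k * E) (fun k => rv k * E) t h := by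
  have hE0 : 0 ≤ E := zero_le_one.trans hE
  have ha : 0 ≤ fun k => (rw k : ℝ) * E := fun k => mul_nonneg (Nat.cast_nonneg _) hE0
  have hb0 : 0 ≤ fun k => (rv k : ℝ) * E := fun k => mul_nonneg (Nat.cast_nonneg _) hE0
  have hb : ∀ k, 1 ≤ k → k ≤ n → 1 ≤ (rv k : ℝ) * E := fun k h1 h2 =>
    one_le_mul_of_one_le_of_one_le (by exact_mod_cast hrv k h1 h2) hE
  refine time_layer_induction (fun h _ hh => ?_) (fun t h0 => absurd h0 (by omega)) ?_
  · simp [hiddenState_zero_time, growth_zero_time (by omega : h ≠ 0)]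
  intro t h hn ihT iht _
  obtain ⟨hψL, hψ0⟩ := hψ (h + 1) le_add_self hn
  have hsup : ∀ k, |hiddenState L w v ψ x (t + 1) h k| ≤
      growth (fun k => rw k * E) (fun k => rv k * E) (t + 1) h := by
    rcases Nat.eq_zero_or_pos h with rfl | hh
    · simpa [hiddenState_succ_zero] using hx (t + 1)
    · exact fun k => (abs_apply_le_sum_abs _ k).trans (ihT hh)
  rw [hiddenState_succ_succ]
  calc _ ≤ ∑ j, |(w (h + 1) *ᵥ hiddenState L w v ψ x (t + 1) h) j|
        + ∑ j, |(v (h + 1) *ᵥ hiddenState L w v ψ x t (h + 1)) j| :=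
        sum_abs_comp_add_le hψL hψ0 _ _
    _ ≤ rw (h + 1) * E * growth (fun k => rw k * E) (fun k => rv k * E) (t + 1) h
        + rv (h + 1) * E * growth (fun k => rw k * E) (fun k => rv k * E) t (h + 1) :=
        add_le_add
          (sum_abs_mulVec_le_of_nnz_le (hwE _ le_add_self hn) (hwr _ le_add_self hn) hsup hE0
            (growth_nonneg ha hb0))
          (sum_abs_mulVec_le_of_nnz_le (hvE _ le_add_self hn) (hvr _ le_add_self hn)
            (fun k => (abs_apply_le_sum_abs _ k).trans (iht le_add_self)) hE0
            (growth_nonneg ha hb0))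
    _ ≤ _ := growth_step hn ha hb


lemma mul_add_mul_le_of_le {δ l c N D g S T : ℝ} (hδl : 0 ≤ δ * l) (hc : 0 ≤ c) (hN : N ≤ g)
    (hD : D ≤ δ * S * T * g) : δ * l * N + c * D ≤ δ * (l * g + S * T * c * g) := by
  calc _ ≤ δ * l * g + c * (δ * S * T * g) := by gcongr
    _ = _ := by ring

lemma perturbation_step_le {δ S l c d g₁ g₂ g₃ t : ℝ} (hδ : 0 ≤ δ) (hS : 0 ≤ S) (hl : 0 ≤ l)
    (ht : 0 ≤ t) (hc : 1 ≤ (t + 1) * c) (hd : 1 ≤ d) (hg₁ : 0 ≤ g₁) (hg₂ : 0 ≤ g₂)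
    (hg : c * g₁ + d * g₂ ≤ g₃) :
    δ * (l * g₁ + S * (t + 1) * c * g₁) + δ * (l * g₂ + (S + l) * t * d * g₂) ≤
      δ * (S + l) * (t + 1) * g₃ := by
  have hsplit : l * g₁ + S * (t + 1) * c * g₁ + (l * g₂ + (S + l) * t * d * g₂) ≤
      (S + l) * (t + 1) * (c * g₁ + d * g₂) := by
    nlinarith [mul_nonneg (mul_nonneg hl hg₁) (sub_nonneg.2 hc),
      mul_nonneg (mul_nonneg hS hg₂) (zero_le_one.trans hd),
      mul_nonneg (mul_nonneg hl hg₂) (sub_nonneg.2 hd)]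
  calc _ = δ * (l * g₁ + S * (t + 1) * c * g₁ + (l * g₂ + (S + l) * t * d * g₂)) := by ring
    _ ≤ δ * ((S + l) * (t + 1) * g₃) := by gcongr; exact hsplit.trans (by gcongr)
    _ = _ := by ring

lemma sum_abs_hiddenState_sub_succ_succ_le {t h : ℕ} {E δ : ℝ} {rw rv : ℕ}
    (hψ : LipschitzWith 1 (ψ (h + 1))) (hE : 0 ≤ E)
    (hwE : ∀ j k, |w (h + 1) j k| ≤ E) (hvE : ∀ j k, |v (h + 1) j k| ≤ E)
    (hwr : nnz (w (h + 1)) ≤ rw) (hvr : nnz (v (h + 1)) ≤ rv)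
    (hwclose : ∀ j k, |w (h + 1) j k - w' (h + 1) j k| ≤ δ)
    (hvclose : ∀ j k, |v (h + 1) j k - v' (h + 1) j k| ≤ δ) :
    ∑ j, |hiddenState L w v ψ x (t + 1) (h + 1) j - hiddenState L w' v' ψ x (t + 1) (h + 1) j| ≤
      (δ * L (h + 1) * ∑ k, |hiddenState L w v ψ x (t + 1) h k|
        + (δ * L (h + 1) + rw * E) *
          ∑ k, |hiddenState L w v ψ x (t + 1) h k - hiddenState L w' v' ψ x (t + 1) h k|)
      + (δ * L (h + 1) * ∑ k, |hiddenState L w v ψ x t (h + 1) k|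
        + (δ * L (h + 1) + rv * E) *
          ∑ k, |hiddenState L w v ψ x t (h + 1) k - hiddenState L w' v' ψ x t (h + 1) k|) := by
  rw [hiddenState_succ_succ, hiddenState_succ_succ]
  refine (sum_abs_comp_add_sub_comp_add_le hψ _ _ _ _).trans (add_le_add ?_ ?_)
  · simpa using sum_abs_mulVec_sub_mulVec_le (u := hiddenState L w v ψ x (t + 1) h)
      (u' := hiddenState L w' v' ψ x (t + 1) h) hwE hwr hE hwclose
  · simpa using sum_abs_mulVec_sub_mulVec_le (u := hiddenState L w v ψ x t (h + 1))
      (u' := hiddenState L w' v' ψ x t (h + 1)) hvE hvr hE hvclose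

lemma sum_abs_hiddenState_sub_le {n : ℕ} {E δ : ℝ} {rw rv : ℕ → ℕ}
    (hψ : ∀ h, 1 ≤ h → h ≤ n → LipschitzWith 1 (ψ h) ∧ ψ h 0 = 0) (hx : ∀ s j, |x s j| ≤ 1)
    (hE : 1 ≤ E) (hrw : ∀ h, 1 ≤ h → h ≤ n → 1 ≤ rw h) (hrv : ∀ h, 1 ≤ h → h ≤ n → 1 ≤ rv h)
    (hwE : ∀ h, 1 ≤ h → h ≤ n → ∀ j k, |w h j k| ≤ E)
    (hvE : ∀ h, 1 ≤ h → h ≤ n → ∀ j k, |v h j k| ≤ E)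
    (hwr : ∀ h, 1 ≤ h → h ≤ n → nnz (w h) ≤ rw h)
    (hvr : ∀ h, 1 ≤ h → h ≤ n → nnz (v h) ≤ rv h) (hδ : 0 ≤ δ)
    (hwclose : ∀ h, 1 ≤ h → h ≤ n → ∀ j k, |w h j k - w' h j k| ≤ δ)
    (hvclose : ∀ h, 1 ≤ h → h ≤ n → ∀ j k, |v h j k - v' h j k| ≤ δ) :
    ∀ t h, h ≤ n → ∑ j, |hiddenState L w v ψ x t h j - hiddenState L w' v' ψ x t h j| ≤
      δ * ((L 0 : ℝ) * L 1 + ∑ k ∈ Icc 1 h, (L k : ℝ)) * t *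
        growth (fun k => δ * L k + rw k * E) (fun k => δ * L k + rv k * E) t h := by
  have hE0 : 0 ≤ E := zero_le_one.trans hE
  have hgain {r : ℕ → ℕ} (hr : ∀ h, 1 ≤ h → h ≤ n → 1 ≤ r h) (k : ℕ) (h1 : 1 ≤ k) (h2 : k ≤ n) :
      (1 : ℝ) ≤ δ * L k + r k * E :=
    le_add_of_nonneg_of_le (by positivity)
      (one_le_mul_of_one_le_of_one_le (by exact_mod_cast hr k h1 h2) hE)
  have hsparse {r : ℕ → ℕ} : (0 : ℕ → ℝ) ≤ (fun k => r k * E) ∧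
      (fun k => (r k : ℝ) * E) ≤ fun k => δ * L k + r k * E :=
    ⟨fun k => by positivity, fun k => le_add_of_nonneg_left (by positivity)⟩
  set c : ℕ → ℝ := fun k => δ * L k + rw k * E
  set d : ℕ → ℝ := fun k => δ * L k + rv k * E
  set S : ℕ → ℝ := fun h => (L 0 : ℝ) * L 1 + ∑ k ∈ Icc 1 h, (L k : ℝ)
  have hc0 : 0 ≤ c := hsparse.1.trans hsparse.2
  have hd0 : 0 ≤ d := hsparse.1.trans hsparse.2
  have hN : ∀ t h, h ≤ n → 1 ≤ h → ∑ j, |hiddenState L w v ψ x t h j| ≤ growth c d t h :=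
    fun t h hn hh => (sum_abs_hiddenState_le hψ hx hE hrv hwE hvE hwr hvr t h hn hh).trans
      (growth_mono hsparse.1 hsparse.2 hsparse.1 hsparse.2)
  refine time_layer_induction (fun h _ => by simp [hiddenState_zero_time])
    (fun t => by simp [hiddenState_succ_zero]; positivity) ?_
  intro t h hn ihT iht
  have hc1 : 1 ≤ ((t + 1 : ℕ) : ℝ) * c (h + 1) :=
    one_le_mul_of_one_le_of_one_le (by simp) (hgain hrw _ le_add_self hn)
  have hprev : δ * L (h + 1) * ∑ j, |hiddenState L w v ψ x (t + 1) h j|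
      + c (h + 1) * ∑ j, |hiddenState L w v ψ x (t + 1) h j - hiddenState L w' v' ψ x (t + 1) h j|
      ≤ δ * (L (h + 1) * growth c d (t + 1) h
        + S h * (t + 1 : ℕ) * c (h + 1) * growth c d (t + 1) h) := by
    rcases Nat.eq_zero_or_pos h with rfl | hh
    -- layer 0 is the common input: it carries no error and has `ℓ¹` norm at most `L 0`
    · have hinput : ∑ j, |x (t + 1) j| ≤ L 0 := by
        simpa using sum_le_sum fun j (_ : j ∈ univ) => hx (t + 1) j
      simp only [hiddenState_succ_zero, sub_self, abs_zero, sum_const_zero, mul_zero, add_zero,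
        growth_zero_layer, mul_one, S, Icc_eq_empty_of_lt zero_lt_one, sum_empty, zero_add] at hc1 ⊢
      nlinarith [mul_le_mul_of_nonneg_left hinput (by positivity : (0 : ℝ) ≤ δ * L 1),
        mul_le_mul_of_nonneg_left hc1 (by positivity : (0 : ℝ) ≤ δ * L 0 * L 1)]
    · exact mul_add_mul_le_of_le (by positivity) (hc0 _) (hN _ _ (by omega) hh) ihT
  have hlag : δ * L (h + 1) * ∑ j, |hiddenState L w v ψ x t (h + 1) j|
      + d (h + 1) * ∑ j, |hiddenState L w v ψ x t (h + 1) j - hiddenState L w' v' ψ x t (h + 1) j|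
      ≤ δ * (L (h + 1) * growth c d t (h + 1)
        + S (h + 1) * t * d (h + 1) * growth c d t (h + 1)) :=
    mul_add_mul_le_of_le (by positivity) (hd0 _) (hN _ _ hn le_add_self) iht
  refine (sum_abs_hiddenState_sub_succ_succ_le (x := x) (t := t) (hψ _ le_add_self hn).1 hE0
    (hwE _ le_add_self hn) (hvE _ le_add_self hn) (hwr _ le_add_self hn) (hvr _ le_add_self hn)
    (hwclose _ le_add_self hn) (hvclose _ le_add_self hn)).trans
    ((add_le_add hprev hlag).trans ?_)
  change _ ≤ δ * S (h + 1) * ((t + 1 : ℕ) : ℝ) * growth c d (t + 1) (h + 1)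
  rw [show S (h + 1) = S h + L (h + 1) by simp only [S, sum_Icc_succ_top le_add_self]; ring]
  push_cast at hc1 ⊢
  exact perturbation_step_le hδ (by positivity) (by positivity) (by positivity) hc1
    (hgain hrv _ le_add_self hn) (growth_nonneg hc0 hd0) (growth_nonneg hc0 hd0)
    (growth_step hn hc0 (hgain hrv))

end RNN

theorem hiddenState_diff_bound_dense_perturbation_general
    (H : ℕ)
    (L : ℕ → ℕ)
    (w w' : (h : ℕ) → Matrix (Fin (L h)) (Fin (L (h - 1))) ℝ)
    (v v' : (h : ℕ) → Matrix (Fin (L h)) (Fin (L h)) ℝ)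
    (ψ : ℕ → ℝ → ℝ)
    (hψ : ∀ h, 1 ≤ h → h ≤ H - 1 → LipschitzWith 1 (ψ h) ∧ ψ h 0 = 0)
    (x : ℕ → Fin (L 0) → ℝ) (hx : ∀ s j, |x s j| ≤ 1)
    (E' : ℝ) (hE' : 1 ≤ E')
    (rw rv : ℕ → ℕ)
    (hrw : ∀ h, 1 ≤ h → h ≤ H → 1 ≤ rw h) (hrv : ∀ h, 1 ≤ h → h ≤ H - 1 → 1 ≤ rv h)
    (hwE : ∀ h, 1 ≤ h → h ≤ H → ∀ j k, |w h j k| ≤ E')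
    (hvE : ∀ h, 1 ≤ h → h ≤ H - 1 → ∀ j k, |v h j k| ≤ E')
    (hwr : ∀ h, 1 ≤ h → h ≤ H → nnz (w h) ≤ rw h)
    (hvr : ∀ h, 1 ≤ h → h ≤ H - 1 → nnz (v h) ≤ rv h)
    (δ₂ : ℝ) (hδ₂ : 0 ≤ δ₂)
    (hwclose : ∀ h, 1 ≤ h → h ≤ H → ∀ j k, |w h j k - w' h j k| ≤ δ₂)
    (hvclose : ∀ h, 1 ≤ h → h ≤ H - 1 → ∀ j k, |v h j k - v' h j k| ≤ δ₂)
    (t : ℕ) (i : ℕ) (hi2 : i ≤ H - 1) :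
    ∑ j, |hiddenState L w v ψ x t i j - hiddenState L w' v' ψ x t i j| ≤
      (t : ℝ) ^ (i + 1) * δ₂ * ((L 0 : ℝ) * (L 1 : ℝ) + ∑ k ∈ Finset.Icc 1 i, (L k : ℝ))
        * (∏ k ∈ Finset.Icc 1 i, (δ₂ * (L k : ℝ) + (rw k : ℝ) * E'))
        * (∏ k ∈ Finset.Icc 1 i, (δ₂ * (L k : ℝ) + (rv k : ℝ) * E')) ^ (t - 1) := by
  have restrict {P : ℕ → Prop} (hP : ∀ h, 1 ≤ h → h ≤ H → P h) : ∀ h, 1 ≤ h → h ≤ H - 1 → P h :=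
    fun h h1 h2 => hP h h1 (h2.trans (Nat.sub_le H 1))
  refine (sum_abs_hiddenState_sub_le hψ hx hE' (restrict hrw) hrv (restrict hwE) hvE
    (restrict hwr) hvr hδ₂ (restrict hwclose) hvclose t i hi2).trans_eq ?_
  unfold growth
  ring

/-- Lemma (hidden-state difference between a sparse RNN `β' = (w, v)` with `nnz(w^h) ≤ r_{w_h}`,
`nnz(v^h) ≤ r_{v_h}` and entries bounded by `E' ≥ 1`, and an arbitrary RNN `β̃ = (w', v')`
with `|β'_j - β̃_j| ≤ δ₂` for every index `j`): for every `t ≥ 1` and hidden layer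
`1 ≤ i ≤ H-1`,
`∑_j |z_t^i(β')(j) - z_t^i(β̃)(j)| ≤ t^{i+1} δ₂ (p L₁ + Σ_{k=1}^i L_k)
  (∏_{k=1}^i [δ₂ L_k + r_{w_k} E']) (∏_{k=1}^i [δ₂ L_k + r_{v_k} E'])^{t-1}`. -/
theorem hiddenState_diff_bound_dense_perturbation
    (H : ℕ) (hH : 2 ≤ H)
    (L : ℕ → ℕ) (hL : ∀ h ≤ H, 1 ≤ L h)
    (w w' : (h : ℕ) → Matrix (Fin (L h)) (Fin (L (h - 1))) ℝ)
    (v v' : (h : ℕ) → Matrix (Fin (L h)) (Fin (L h)) ℝ)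
    (ψ : ℕ → ℝ → ℝ)
    (hψ : ∀ h, 1 ≤ h → h ≤ H - 1 → LipschitzWith 1 (ψ h) ∧ ψ h 0 = 0)
    (x : ℕ → Fin (L 0) → ℝ) (hx : ∀ s j, |x s j| ≤ 1)
    (E' : ℝ) (hE' : 1 ≤ E')
    (rw rv : ℕ → ℕ)
    (hrw : ∀ h, 1 ≤ h → h ≤ H → 1 ≤ rw h) (hrv : ∀ h, 1 ≤ h → h ≤ H - 1 → 1 ≤ rv h)
    (hwE : ∀ h, 1 ≤ h → h ≤ H → ∀ j k, |w h j k| ≤ E')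
    (hvE : ∀ h, 1 ≤ h → h ≤ H - 1 → ∀ j k, |v h j k| ≤ E')
    (hwr : ∀ h, 1 ≤ h → h ≤ H → nnz (w h) ≤ rw h)
    (hvr : ∀ h, 1 ≤ h → h ≤ H - 1 → nnz (v h) ≤ rv h)
    (δ₂ : ℝ) (hδ₂ : 0 ≤ δ₂)
    (hwclose : ∀ h, 1 ≤ h → h ≤ H → ∀ j k, |w h j k - w' h j k| ≤ δ₂)
    (hvclose : ∀ h, 1 ≤ h → h ≤ H - 1 → ∀ j k, |v h j k - v' h j k| ≤ δ₂)
    (t : ℕ) (ht : 1 ≤ t) (i : ℕ) (hi1 : 1 ≤ i) (hi2 : i ≤ H - 1) :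
    ∑ j, |hiddenState L w v ψ x t i j - hiddenState L w' v' ψ x t i j| ≤
      (t : ℝ) ^ (i + 1) * δ₂ * ((L 0 : ℝ) * (L 1 : ℝ) + ∑ k ∈ Finset.Icc 1 i, (L k : ℝ))
        * (∏ k ∈ Finset.Icc 1 i, (δ₂ * (L k : ℝ) + (rw k : ℝ) * E'))
        * (∏ k ∈ Finset.Icc 1 i, (δ₂ * (L k : ℝ) + (rv k : ℝ) * E')) ^ (t - 1) :=
  hiddenState_diff_bound_dense_perturbation_general H L w w' v v' ψ hψ x hx E' hE' rw rv hrw hrv hwE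
    hvE hwr hvr δ₂ hδ₂ hwclose hvclose t i hi2
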